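/- Fix z ∈ ℝ^d, r > 0, s > 0, let F_z = { x ↦ sig_s(r² − ‖x − c‖²) : ‖c − z‖ = r }, and let P be any probability measure on ℝ^d. There is a constant C > 0 (depending only on d, r and s) such that for every ε ∈ (0,1) there exist N ≤ C·(r/ε)^d pairs of measurable functions (l_1,u_1),…,(l_N,u_N) on ℝ^d with the property that for every c with ‖c − z‖ = r there is an index i with l_i ≤ f_{z,c} ≤ u_i pointwise and ∫ (u_i − l_i) dP ≤ ε; in particular the ε-bracketing number N_[](ε, F_z, L¹(P)) is finite for every ε > 0. -/

import Mathlib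

/-!
The map `c ↦ f_{z,c}` is Lipschitz into the bounded functions with the sup norm: the derivative of
`t ↦ sig_s (r² - t²)` is at most `e^{r²/s} / √s`, because the sigmoid decays like `e^{(r² - t²)/s}`
and `2|t| e^{-t²/s} ≤ √s`. Hence the uniform bands `f_{z,t} ± ε/2` around the centres `t` of a
`δ`-net of the sphere, `δ = ε √s / (2 e^{r²/s})`, are `ε`-brackets for every probability measure.
A maximal `δ`-separated subset of the sphere is such a net, and comparing the volume of the disjoint
balls of radius `δ/2` around its points with that of the ball of radius `r + δ/2` bounds its size
by `(1 + 2r/δ)^d`.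
-/

open MeasureTheory

noncomputable def sig (s t : ℝ) : ℝ := 1 / (1 + Real.exp (-t / s))

open Real Metric
open scoped NNReal

lemma sig_nonneg (s t : ℝ) : 0 ≤ sig s t := by
  unfold sig
  positivity

lemma sig_le_one (s t : ℝ) : sig s t ≤ 1 := by
  unfold sig
  rw [div_le_one (by positivity)]
  linarith [exp_pos (-t / s)]

lemma sig_le_exp (s t : ℝ) : sig s t ≤ exp (t / s) := by
  unfold sig
  rw [div_le_iff₀ (by positivity), mul_add, neg_div, ← exp_add, add_neg_cancel, exp_zero]
  linarith [exp_pos (t / s)]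

lemma continuous_sig (s : ℝ) : Continuous (sig s) :=
  continuous_const.div (by fun_prop) fun t => by positivity

lemma hasDerivAt_sig (s t : ℝ) : HasDerivAt (sig s) (sig s t * (1 - sig s t) / s) t := by
  have hE : HasDerivAt (fun t => 1 + exp (-t / s)) (exp (-t / s) * (-1 / s)) t :=
    (((hasDerivAt_id t).neg.div_const s).exp).const_add 1 |>.congr_deriv (by simp)
  have hsig : sig s = fun t => (1 + exp (-t / s))⁻¹ := funext fun t => one_div _
  rw [hsig]
  refine (hE.inv (by positivity)).congr_deriv ?_
  field_simp
  ring

lemma two_mul_abs_mul_exp_neg_sq_div_le {s : ℝ} (hs : 0 < s) (t : ℝ) :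
    2 * |t| * exp (-(t ^ 2 / s)) ≤ √s := by
  have amgm : 2 * |t| ≤ √s * (t ^ 2 / s + 1) := by
    obtain ⟨q, hq, rfl⟩ : ∃ q, 0 < q ∧ s = q ^ 2 := ⟨√s, sqrt_pos.mpr hs, (sq_sqrt hs.le).symm⟩
    rw [sqrt_sq hq.le]
    field_simp
    nlinarith [sq_nonneg (|t| - q), sq_abs t]
  calc 2 * |t| * exp (-(t ^ 2 / s))
      ≤ √s * exp (t ^ 2 / s) * exp (-(t ^ 2 / s)) := by
        refine mul_le_mul_of_nonneg_right (amgm.trans ?_) (exp_pos _).le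
        gcongr
        exact add_one_le_exp _
    _ = √s := by rw [mul_assoc, ← exp_add, add_neg_cancel, exp_zero, mul_one]

lemma hasDerivAt_sig_sq_sub_sq (s r t : ℝ) :
    HasDerivAt (fun t => sig s (r ^ 2 - t ^ 2))
      (sig s (r ^ 2 - t ^ 2) * (1 - sig s (r ^ 2 - t ^ 2)) / s * (-(2 * t))) t :=
  (hasDerivAt_sig s _).comp t ((hasDerivAt_pow 2 t).const_sub _ |>.congr_deriv (by ring))

lemma abs_deriv_sig_sq_sub_sq_le {s : ℝ} (hs : 0 < s) (r t : ℝ) :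
    |sig s (r ^ 2 - t ^ 2) * (1 - sig s (r ^ 2 - t ^ 2)) / s * (-(2 * t))|
      ≤ exp (r ^ 2 / s) / √s := by
  set σ := sig s (r ^ 2 - t ^ 2)
  have hσ : σ * (1 - σ) ≤ exp ((r ^ 2 - t ^ 2) / s) := by
    nlinarith [sig_nonneg s (r ^ 2 - t ^ 2), sig_le_one s (r ^ 2 - t ^ 2),
      sig_le_exp s (r ^ 2 - t ^ 2)]
  have hσ0 : 0 ≤ σ * (1 - σ) :=
    mul_nonneg (sig_nonneg _ _) (sub_nonneg.mpr (sig_le_one _ _))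
  calc |σ * (1 - σ) / s * (-(2 * t))| = σ * (1 - σ) * (2 * |t|) / s := by
        rw [abs_mul, abs_neg, abs_div, abs_of_nonneg hσ0, abs_of_pos hs, abs_mul, abs_two]
        ring
    _ ≤ exp ((r ^ 2 - t ^ 2) / s) * (2 * |t|) / s := by gcongr
    _ = exp (r ^ 2 / s) * (2 * |t| * exp (-(t ^ 2 / s))) / s := by
        rw [sub_div, sub_eq_add_neg, exp_add]
        ring
    _ ≤ exp (r ^ 2 / s) * √s / s := by
        gcongr
        exact two_mul_abs_mul_exp_neg_sq_div_le hs t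
    _ = exp (r ^ 2 / s) / √s := by
        rw [mul_div_assoc, sqrt_div_self', mul_one_div]

lemma abs_sig_sq_sub_sq_sub_le {s : ℝ} (hs : 0 < s) (r a b : ℝ) :
    |sig s (r ^ 2 - a ^ 2) - sig s (r ^ 2 - b ^ 2)| ≤ exp (r ^ 2 / s) / √s * |a - b| :=
  Convex.norm_image_sub_le_of_norm_hasDerivWithin_le
    (fun t _ => (hasDerivAt_sig_sq_sub_sq s r t).hasDerivWithinAt)
    (fun t _ => abs_deriv_sig_sq_sub_sq_le hs r t) convex_univ (Set.mem_univ b) (Set.mem_univ a)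

lemma abs_sig_sq_sub_norm_sq_sub_le {E : Type*} [SeminormedAddCommGroup E] {s : ℝ} (hs : 0 < s)
    (r : ℝ) (x c t : E) :
    |sig s (r ^ 2 - ‖x - c‖ ^ 2) - sig s (r ^ 2 - ‖x - t‖ ^ 2)| ≤ exp (r ^ 2 / s) / √s * dist c t :=
  calc _ ≤ exp (r ^ 2 / s) / √s * |‖x - c‖ - ‖x - t‖| := abs_sig_sq_sub_sq_sub_le hs r _ _
    _ ≤ exp (r ^ 2 / s) / √s * dist c t := by
        gcongr
        rw [← dist_sub_left x c t, dist_eq_norm]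
        exact abs_norm_sub_norm_le _ _

section Packing

variable {E : Type*} [NormedAddCommGroup E] [NormedSpace ℝ E] [FiniteDimensional ℝ E]

lemma card_le_of_isSeparated_of_subset_closedBall {z : E} {r : ℝ} (hr : 0 ≤ r) {δ : ℝ≥0}
    (hδ : δ ≠ 0) {T : Finset E} (hT : (T : Set E) ⊆ closedBall z r)
    (hsep : IsSeparated δ (T : Set E)) :
    (T.card : ℝ) ≤ (1 + 2 * r / δ) ^ Module.finrank ℝ E := by
  borelize E
  let μ : Measure E := Measure.addHaar
  have hδ' : (0 : ℝ) < δ := NNReal.coe_pos.mpr (pos_iff_ne_zero.mpr hδ)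
  have hdisj : (T : Set E).PairwiseDisjoint fun t => ball t (δ / 2) := by
    intro a ha b hb hab
    refine ball_disjoint_ball ?_
    have : δ < nndist a b := ENNReal.coe_lt_coe.mp ((edist_nndist a b) ▸ hsep ha hb hab)
    rw [add_halves, ← coe_nndist]
    exact_mod_cast this.le
  have hsub : (⋃ t ∈ T, ball t (δ / 2)) ⊆ ball z (r + δ / 2) := by
    refine Set.iUnion₂_subset fun t ht => ball_subset_ball' ?_
    linarith [mem_closedBall.mp (hT ht)]
  have hvol : ∑ t ∈ T, μ (ball t (δ / 2)) ≤ μ (ball z (r + δ / 2)) := by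
    rw [← measure_biUnion_finset hdisj fun t _ => measurableSet_ball]
    exact measure_mono hsub
  simp only [μ.addHaar_ball_of_pos _ (half_pos hδ'),
    μ.addHaar_ball_of_pos _ (by positivity : 0 < r + δ / 2), Finset.sum_const, nsmul_eq_mul,
    ← mul_assoc] at hvol
  have hcard : (T.card : ℝ) * (δ / 2) ^ Module.finrank ℝ E ≤ (r + δ / 2) ^ Module.finrank ℝ E := by
    have := (ENNReal.mul_le_mul_iff_left (measure_ball_pos μ (0 : E) one_pos).ne'
      measure_ball_lt_top.ne).mp hvol
    rwa [← ENNReal.ofReal_natCast, ← ENNReal.ofReal_mul (by positivity),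
      ENNReal.ofReal_le_ofReal_iff (by positivity)] at this
  calc (T.card : ℝ) ≤ (r + δ / 2) ^ Module.finrank ℝ E / (δ / 2) ^ Module.finrank ℝ E :=
        (le_div_iff₀ (by positivity)).mpr hcard
    _ = (1 + 2 * r / δ) ^ Module.finrank ℝ E := by
        rw [← div_pow]
        congr 1
        field_simp
        ring

lemma Metric.packingNumber_le_of_forall_finset {X : Type*} [PseudoEMetricSpace X] {ε : ℝ≥0}
    {A : Set X} {n : ℕ}
    (h : ∀ T : Finset X, (T : Set X) ⊆ A → IsSeparated ε (T : Set X) → T.card ≤ n) :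
    packingNumber ε A ≤ n := by
  refine iSup₂_le fun C hCA => iSup_le fun hsep => ?_
  rcases C.finite_or_infinite with hfin | hinf
  · rw [hfin.encard_eq_coe_toFinset_card, Nat.cast_le]
    exact h _ (by simpa using hCA) (by simpa using hsep)
  · obtain ⟨T, hTC, hcard⟩ := hinf.exists_subset_card_eq (n + 1)
    have := h T (hTC.trans hCA) (hsep.subset hTC)
    omega

lemma exists_finite_net_of_subset_closedBall (z : E) {r : ℝ} (hr : 0 ≤ r) {δ : ℝ≥0}
    (hδ : δ ≠ 0) {A : Set E} (hA : A ⊆ closedBall z r) :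
    ∃ (N : ℕ) (t : Fin N → E), (N : ℝ) ≤ (1 + 2 * r / δ) ^ Module.finrank ℝ E ∧
      ∀ c ∈ A, ∃ i, dist c (t i) ≤ δ := by
  set n := ⌊(1 + 2 * r / δ) ^ Module.finrank ℝ E⌋₊
  have hpack : packingNumber δ A ≤ n := packingNumber_le_of_forall_finset fun T hT hsep =>
    Nat.le_floor (card_le_of_isSeparated_of_subset_closedBall hr hδ (hT.trans hA) hsep)
  have htop : packingNumber δ A ≠ ⊤ := ne_top_of_le_ne_top (ENat.natCast_ne_top n) hpack
  have hfin : (maximalSeparatedSet δ A).Finite := by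
    rw [← Set.encard_ne_top_iff, encard_maximalSeparatedSet htop]
    exact htop
  set T := hfin.toFinset
  refine ⟨T.card, fun i => T.equivFin.symm i, ?_, fun c hc => ?_⟩
  · have : (T.card : ℕ∞) ≤ n := by
      rw [← hfin.encard_eq_coe_toFinset_card, encard_maximalSeparatedSet htop]
      exact hpack
    exact (Nat.cast_le.mpr (ENat.natCast_le_natCast.mp this)).trans (Nat.floor_le (by positivity))
  · obtain ⟨t, ht, hct⟩ := isCover_maximalSeparatedSet htop hc
    refine ⟨T.equivFin ⟨t, hfin.mem_toFinset.mpr ht⟩, ?_⟩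
    simp only [Equiv.symm_apply_apply]
    exact_mod_cast edist_le_coe.mp hct

end Packing

lemma exists_bracketing_of_uniform_approx {X ι : Type*} [MeasurableSpace X] (P : Measure X)
    [IsProbabilityMeasure P] {f : ι → X → ℝ} {S : Set ι} {N : ℕ} {t : Fin N → ι} {η : ℝ}
    (hf : ∀ i, Measurable (f (t i))) (happrox : ∀ c ∈ S, ∃ i, ∀ x, |f c x - f (t i) x| ≤ η) :
    ∃ l u : Fin N → X → ℝ, (∀ i, Measurable (l i) ∧ Measurable (u i)) ∧
      ∀ c ∈ S, ∃ i, (∀ x, l i x ≤ f c x ∧ f c x ≤ u i x) ∧ ∫ x, (u i x - l i x) ∂P ≤ 2 * η := by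
  refine ⟨fun i x => f (t i) x - η, fun i x => f (t i) x + η,
    fun i => ⟨(hf i).sub_const η, (hf i).add_const η⟩, fun c hc => ?_⟩
  obtain ⟨i, hi⟩ := happrox c hc
  refine ⟨i, fun x => ?_, ?_⟩
  · have := abs_le.mp (hi x)
    constructor <;> linarith [this.1, this.2]
  · simp only [add_sub_sub_cancel, integral_const, probReal_univ, one_smul]
    linarith

lemma exists_sig_bracketing {d : ℕ} (z : EuclideanSpace ℝ (Fin d)) {r s : ℝ} (hr : 0 ≤ r)
    (hs : 0 < s) (P : Measure (EuclideanSpace ℝ (Fin d))) [IsProbabilityMeasure P] {ε : ℝ}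
    (hε : 0 < ε) :
    ∃ (N : ℕ) (l u : Fin N → EuclideanSpace ℝ (Fin d) → ℝ),
      (N : ℝ) ≤ (1 + 4 * (exp (r ^ 2 / s) / √s) * r / ε) ^ d ∧
      (∀ i, Measurable (l i) ∧ Measurable (u i)) ∧
      ∀ c : EuclideanSpace ℝ (Fin d), ‖c - z‖ = r → ∃ i : Fin N,
        (∀ x, l i x ≤ sig s (r ^ 2 - ‖x - c‖ ^ 2) ∧ sig s (r ^ 2 - ‖x - c‖ ^ 2) ≤ u i x) ∧
        (∫ x, (u i x - l i x) ∂P) ≤ ε := by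
  set L := exp (r ^ 2 / s) / √s
  have hL : 0 < L := by positivity
  let δ : ℝ≥0 := ⟨ε / (2 * L), by positivity⟩
  have hδ0 : δ ≠ 0 := (NNReal.coe_pos (r := δ)).mp (show 0 < ε / (2 * L) by positivity) |>.ne'
  obtain ⟨N, t, hN, hnet⟩ := exists_finite_net_of_subset_closedBall z hr hδ0
    sphere_subset_closedBall
  obtain ⟨l, u, hmeas, hbr⟩ := exists_bracketing_of_uniform_approx P
    (f := fun c x => sig s (r ^ 2 - ‖x - c‖ ^ 2)) (S := sphere z r) (t := t) (η := ε / 2)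
    (fun i => ((continuous_sig s).comp (by fun_prop)).measurable) fun c hc => by
      obtain ⟨i, hi⟩ := hnet c hc
      refine ⟨i, fun x => (abs_sig_sq_sub_norm_sq_sub_le hs r x c (t i)).trans ?_⟩
      calc L * dist c (t i) ≤ L * (ε / (2 * L)) := by gcongr; exact hi
        _ = ε / 2 := by field_simp
  refine ⟨N, l, u, ?_, hmeas, fun c hc => ?_⟩
  · have hδ : 2 * r / (δ : ℝ) = 4 * L * r / ε := by
      change 2 * r / (ε / (2 * L)) = _
      field_simp
      ring
    rwa [finrank_euclideanSpace_fin, hδ] at hN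
  · obtain ⟨i, hi, hint⟩ := hbr c (mem_sphere_iff_norm.mpr hc)
    exact ⟨i, hi, by linarith⟩

/-- Bracketing bound for the class `F_z = { x ↦ sig_s(r² − ‖x − c‖²) : ‖c − z‖ = r }`:
there is `C > 0` (depending only on `d`, `r`, `s`) such that for every `ε ∈ (0,1)` the class
admits an `ε`-bracketing in `L¹(P)` of cardinality at most `C·(r/ε)^d`; in particular the
`ε`-bracketing number is finite for every `ε > 0`. -/
theorem stmt_10 (d : ℕ) (z : EuclideanSpace ℝ (Fin d)) (r s : ℝ) (hr : 0 < r) (hs : 0 < s)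
    (P : Measure (EuclideanSpace ℝ (Fin d))) [IsProbabilityMeasure P] :
    (∃ C > (0 : ℝ), ∀ ε ∈ Set.Ioo (0 : ℝ) 1,
      ∃ (N : ℕ) (l u : Fin N → EuclideanSpace ℝ (Fin d) → ℝ),
        (N : ℝ) ≤ C * (r / ε) ^ d ∧
        (∀ i, Measurable (l i) ∧ Measurable (u i)) ∧
        ∀ c : EuclideanSpace ℝ (Fin d), ‖c - z‖ = r → ∃ i : Fin N,
          (∀ x, l i x ≤ sig s (r ^ 2 - ‖x - c‖ ^ 2) ∧ sig s (r ^ 2 - ‖x - c‖ ^ 2) ≤ u i x) ∧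
          (∫ x, (u i x - l i x) ∂P) ≤ ε) ∧
    (∀ ε > (0 : ℝ),
      ∃ (N : ℕ) (l u : Fin N → EuclideanSpace ℝ (Fin d) → ℝ),
        (∀ i, Measurable (l i) ∧ Measurable (u i)) ∧
        ∀ c : EuclideanSpace ℝ (Fin d), ‖c - z‖ = r → ∃ i : Fin N,
          (∀ x, l i x ≤ sig s (r ^ 2 - ‖x - c‖ ^ 2) ∧ sig s (r ^ 2 - ‖x - c‖ ^ 2) ≤ u i x) ∧
          (∫ x, (u i x - l i x) ∂P) ≤ ε) := by
  set L := exp (r ^ 2 / s) / √s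
  refine ⟨⟨(4 * L + 1 / r) ^ d, by positivity, fun ε ⟨hε0, hε1⟩ => ?_⟩, fun ε hε => ?_⟩
  · obtain ⟨N, l, u, hN, hbr⟩ := exists_sig_bracketing z hr.le hs P hε0
    refine ⟨N, l, u, hN.trans ?_, hbr⟩
    rw [← mul_pow]
    gcongr
    calc 1 + 4 * L * r / ε ≤ 1 / ε + 4 * L * r / ε := by
          gcongr
          rw [le_div_iff₀ hε0, one_mul]
          exact hε1.le
      _ = (4 * L + 1 / r) * (r / ε) := by field_simp; ring
  · obtain ⟨N, l, u, -, hbr⟩ := exists_sig_bracketing z hr.le hs P hε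
    exact ⟨N, l, u, hbr⟩
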